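/- Let x be a cut-vertex of a connected graph G and H a component of G − x. If the induced subgraph G[V(H) ∖ N_H(x)] is disconnected, then Staller does not have an x-isolation strategy in the Staller-start connected domination game played on G[V(H) ∪ {x}]. -/

import Mathlib

open Finset

namespace ConnDomGame

variable {V : Type*} [Fintype V] [DecidableEq V]

/-- The closed neighborhood of a finite set of vertices. -/
def nbhd (G : SimpleGraph V) [DecidableRel G.Adj] (D : Finset V) : Finset V :=
  univ.filter fun u => u ∈ D ∨ ∃ v ∈ D, G.Adj u v

/-- The legal moves in the connected domination game on `G` with predominated set `S`,
from the position where the set of played vertices is `D`: a legal move must dominate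
a not-yet-dominated vertex and (except for the first move) be adjacent to a played vertex. -/
def legalMoves (G : SimpleGraph V) [DecidableRel G.Adj] (S D : Finset V) : Finset V :=
  univ.filter fun v =>
    ¬ (nbhd G {v} ⊆ S ∪ nbhd G D) ∧ (D = ∅ ∨ ∃ u ∈ D, G.Adj v u)

/-- Optimal number of further moves in the connected domination game on `G` with
predominated set `S`, from the position with played set `D`; `turn = true` means
Dominator (the minimizer) is to move.  The value is `⊤` if the player to move can
force the game to get stuck with an undominated vertex remaining.  The fuel
argument `n` is sufficient whenever `n + D.card ≥ Fintype.card V`. -/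
noncomputable def val (G : SimpleGraph V) [DecidableRel G.Adj] (S : Finset V) :
    Bool → ℕ → Finset V → ℕ∞
  | _, 0, D => if univ ⊆ S ∪ nbhd G D then 0 else ⊤
  | turn, n + 1, D =>
    if h : (legalMoves G S D).Nonempty then
      if turn then
        1 + (legalMoves G S D).inf' h fun v => val G S false n (insert v D)
      else
        1 + (legalMoves G S D).sup' h fun v => val G S true n (insert v D)
    else if univ ⊆ S ∪ nbhd G D then 0 else ⊤

/-- The Dominator-start game connected domination number of `G` with the vertices of `S`
predominated (`γ_cg(G|S)`; for `S = ∅` this is `γ_cg(G)`). -/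
noncomputable def gammaCG (G : SimpleGraph V) [DecidableRel G.Adj] (S : Finset V) : ℕ∞ :=
  val G S true (Fintype.card V) ∅

/-- The Staller-start game connected domination number of `G` with `S` predominated. -/
noncomputable def gammaCG' (G : SimpleGraph V) [DecidableRel G.Adj] (S : Finset V) : ℕ∞ :=
  val G S false (Fintype.card V) ∅

/-- The connected domination number of `G` with the set `S` predominated:
minimum size of a set `D` inducing a connected subgraph and dominating all
vertices outside `S`. -/
noncomputable def gammaC (G : SimpleGraph V) (S : Finset V) : ℕ :=
  sInf {k | ∃ D : Finset V, D.card = k ∧ (G.induce (D : Set V)).Connected ∧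
    ∀ u, u ∈ S ∨ u ∈ D ∨ ∃ v ∈ D, G.Adj u v}

/-- `l` is a legal sequence of first moves of the connected domination game on `G`
with predominated set `S`. -/
def LegalSeq (G : SimpleGraph V) [DecidableRel G.Adj] (S : Finset V) (l : List V) : Prop :=
  ∀ i (h : i < l.length), l.get ⟨i, h⟩ ∈ legalMoves G S (l.take i).toFinset

end ConnDomGame

instance instDecidableRelInduceAdj {V : Type*} (G : SimpleGraph V) [DecidableRel G.Adj]
    (s : Set V) : DecidableRel (G.induce s).Adj := fun a b =>
  inferInstanceAs (Decidable (G.Adj a b))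

namespace ConnDomGame

/-- `l` is a play of a Staller-start game consistent with Staller's strategy `σ`:
the moves at even positions (Staller's moves, Staller moving first) are prescribed by
`σ` applied to the history so far. -/
def StallerConsistent {V : Type*} (σ : List V → V) (l : List V) : Prop :=
  ∀ i (h : i < l.length), Even i → l.get ⟨i, h⟩ = σ (l.take i)

/-- Staller has an `x`-isolation strategy in the Staller-start connected domination
game on `G`: she has a strategy (always producing legal moves on her turns) that
guarantees, in every consistent play, that whenever a vertex of `N[x]` is played,
every vertex at distance `1` or `2` from `x` (i.e. every vertex of `N[N[x]]` other
than `x`) was already dominated before that move. -/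
def HasStallerIsolation {V : Type*} [Fintype V] [DecidableEq V] (G : SimpleGraph V)
    [DecidableRel G.Adj] (x : V) : Prop :=
  ∃ σ : List V → V,
    (∀ l, LegalSeq G ∅ l → StallerConsistent σ l → Even l.length →
      (legalMoves G ∅ l.toFinset).Nonempty → σ l ∈ legalMoves G ∅ l.toFinset) ∧
    (∀ l, LegalSeq G ∅ l → StallerConsistent σ l →
      ∀ i (h : i < l.length), l.get ⟨i, h⟩ ∈ nbhd G {x} →
        ∀ u, u ∈ nbhd G (nbhd G {x}) → u ≠ x → u ∈ nbhd G (l.take i).toFinset)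

/-- `H` is (the vertex set of) a connected component of `G − x`. -/
def IsCompOf {V : Type*} (G : SimpleGraph V) (x : V) (H : Finset V) : Prop :=
  x ∉ H ∧ H.Nonempty ∧ (G.induce (H : Set V)).Connected ∧
    ∀ u ∈ H, ∀ v, G.Adj u v → v ≠ x → v ∈ H

end ConnDomGame

namespace ConnDomGameAux

open ConnDomGame

variable {V : Type*} [Fintype V] [DecidableEq V]

lemma mem_nbhd (G : SimpleGraph V) [DecidableRel G.Adj] {D : Finset V} {u : V} :
    u ∈ nbhd G D ↔ u ∈ D ∨ ∃ v ∈ D, G.Adj u v := by simp [nbhd]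

lemma nbhd_empty (G : SimpleGraph V) [DecidableRel G.Adj] : nbhd G (∅ : Finset V) = ∅ := by
  simp [nbhd]

lemma subset_nbhd (G : SimpleGraph V) [DecidableRel G.Adj] (D : Finset V) : D ⊆ nbhd G D :=
  fun u hu => (mem_nbhd G).2 (Or.inl hu)

lemma mem_legalMoves (G : SimpleGraph V) [DecidableRel G.Adj] {S D : Finset V} {v : V} :
    v ∈ legalMoves G S D ↔
      ¬ (nbhd G {v} ⊆ S ∪ nbhd G D) ∧ (D = ∅ ∨ ∃ u ∈ D, G.Adj v u) := by
  simp [legalMoves]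

lemma not_mem_of_legal {G : SimpleGraph V} [DecidableRel G.Adj] {S D : Finset V} {v : V}
    (h : v ∈ legalMoves G S D) : v ∉ D := by
  intro hv
  refine ((mem_legalMoves G).1 h).1 (fun u hu => ?_)
  rcases (mem_nbhd G).1 hu with h1 | ⟨w, hw, hadj⟩
  · simp only [Finset.mem_singleton] at h1
    exact Finset.mem_union_right _ ((mem_nbhd G).2 (Or.inl (by rw [h1]; exact hv)))
  · simp only [Finset.mem_singleton] at hw
    exact Finset.mem_union_right _ ((mem_nbhd G).2 (Or.inr ⟨v, hv, hw ▸ hadj⟩))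

lemma legalSeq_nil (G : SimpleGraph V) [DecidableRel G.Adj] (S : Finset V) :
    LegalSeq G S ([] : List V) := fun i h => absurd h (by simp)

lemma legalSeq_append {G : SimpleGraph V} [DecidableRel G.Adj] {S : Finset V} {l : List V}
    {v : V} (hl : LegalSeq G S l) (hv : v ∈ legalMoves G S l.toFinset) :
    LegalSeq G S (l ++ [v]) := by
  intro i h
  rcases lt_or_eq_of_le (Nat.lt_succ_iff.1 (by simpa using h)) with hi | hi
  · have hg : (l ++ [v]).get ⟨i, h⟩ = l.get ⟨i, hi⟩ := by
      simp [List.getElem_append_left hi]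
    rw [hg, List.take_append_of_le_length (le_of_lt hi)]
    exact hl i hi
  · subst hi
    have hg : (l ++ [v]).get ⟨l.length, h⟩ = v := by simp
    rw [hg, List.take_left (l₁ := l) (l₂ := [v])]
    exact hv

lemma stallerConsistent_append {σ : List V → V} {l : List V} {v : V}
    (hl : StallerConsistent σ l) (hv : Even l.length → v = σ l) :
    StallerConsistent σ (l ++ [v]) := by
  intro i h he
  rcases lt_or_eq_of_le (Nat.lt_succ_iff.1 (by simpa using h)) with hi | hi
  · have hg : (l ++ [v]).get ⟨i, h⟩ = l.get ⟨i, hi⟩ := by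
      simp [List.getElem_append_left hi]
    rw [hg, List.take_append_of_le_length (le_of_lt hi)]
    exact hl i hi he
  · subst hi
    have hg : (l ++ [v]).get ⟨l.length, h⟩ = v := by simp
    rw [hg, List.take_left (l₁ := l) (l₂ := [v])]
    exact hv he

lemma rtg_of_induce_reachable {V : Type*} (G : SimpleGraph V) (s : Set V) {a b : s}
    (h : (G.induce s).Reachable a b) :
    Relation.ReflTransGen (fun p q : V => G.Adj p q ∧ p ∈ s ∧ q ∈ s) a.val b.val := by
  obtain ⟨w⟩ := h
  induction w with
  | nil => exact Relation.ReflTransGen.refl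
  | @cons p q r hadj tail ih =>
    exact Relation.ReflTransGen.head ⟨hadj, p.2, q.2⟩ ih

lemma induce_reachable_of_rtg {V : Type*} (G : SimpleGraph V) (s : Set V) {p q : V}
    (h : Relation.ReflTransGen (fun p q : V => G.Adj p q ∧ p ∈ s ∧ q ∈ s) p q)
    (hp : p ∈ s) (hq : q ∈ s) : (G.induce s).Reachable ⟨p, hp⟩ ⟨q, hq⟩ := by
  induction h with
  | refl => rfl
  | @tail b c hb hbc ih =>
    exact (ih hbc.2.1).trans (SimpleGraph.Adj.reachable (by exact hbc.1))

end ConnDomGameAux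

open ConnDomGameAux
open ConnDomGame in
/-- If `x` is a cut-vertex of a connected graph `G`, `H` is a component of `G − x`,
and `G[V(H) ∖ N_H(x)]` is disconnected, then Staller has no `x`-isolation strategy in
the Staller-start connected domination game on `G[V(H) ∪ {x}]`. -/
theorem no_staller_isolation_of_disconnected {V : Type*} [Fintype V] [DecidableEq V]
    (G : SimpleGraph V) [DecidableRel G.Adj] (hG : G.Connected) (x : V)
    (hcut : ¬ (G.induce {v | v ≠ x}).Connected)
    (H : Finset V) (hH : IsCompOf G x H)
    (hdisc : ¬ (G.induce ((H.filter fun u => ¬ G.Adj x u : Finset V) : Set V)).Connected) :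
    ¬ HasStallerIsolation (G.induce ((H : Set V) ∪ {x}))
        ⟨x, Set.mem_union_right _ rfl⟩ := by
  classical
  set W : Set V := (H : Set V) ∪ {x} with hWdef
  set G' := G.induce W with hG'def
  set x' : W := ⟨x, Set.mem_union_right _ rfl⟩ with hx'def
  intro hiso
  obtain ⟨σ, hσ1, hσ2⟩ := hiso
  set HN : Finset V := H.filter fun u => ¬ G.Adj x u with hHNdef
  set rH : V → V → Prop :=
    fun p q => G.Adj p q ∧ p ∈ (H : Set V) ∧ q ∈ (H : Set V) with hrHdef
  set r : V → V → Prop :=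
    fun p q => G.Adj p q ∧ p ∈ (HN : Set V) ∧ q ∈ (HN : Set V) with hrdef
  have hHNH : ∀ {z}, z ∈ HN → z ∈ H := fun hz => (Finset.mem_filter.1 hz).1
  have hmemW : ∀ {z}, z ∈ H → z ∈ W := fun hz => Set.mem_union_left _ (Finset.mem_coe.2 hz)
  have hHreach : ∀ p q, p ∈ H → q ∈ H → Relation.ReflTransGen rH p q := by
    intro p q hp hq
    exact rtg_of_induce_reachable G (H : Set V)
      (hH.2.2.1.preconnected ⟨p, Finset.mem_coe.2 hp⟩ ⟨q, Finset.mem_coe.2 hq⟩)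
  have hrsymm : Symmetric r := fun a b hab => ⟨hab.1.symm, hab.2.2, hab.2.1⟩
  -- x has a neighbor in H
  have hxadj : ∃ a ∈ H, G.Adj x a := by
    obtain ⟨h0, hh0⟩ := hH.2.1
    have hreach : Relation.ReflTransGen G.Adj h0 x :=
      (SimpleGraph.reachable_iff_reflTransGen h0 x).1 (hG.preconnected h0 x)
    revert hh0
    induction hreach using Relation.ReflTransGen.head_induction_on with
    | refl => intro h; exact absurd h hH.1
    | @head a c hstep htail ih =>
      intro ha
      by_cases hc : c = x
      · exact ⟨a, ha, (hc ▸ hstep).symm⟩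
      · exact ih (hH.2.2.2 a ha c hstep hc)
  -- first move is legal
  have hne0 : (legalMoves G' ∅ (([] : List W).toFinset)).Nonempty := by
    refine ⟨x', (mem_legalMoves G').2 ⟨?_, Or.inl rfl⟩⟩
    intro hsub
    have hmem := hsub (subset_nbhd G' {x'} (Finset.mem_singleton_self x'))
    simp [nbhd_empty] at hmem
  have hnilLeg : LegalSeq G' ∅ ([] : List W) := legalSeq_nil G' ∅
  have hnilCons : StallerConsistent σ ([] : List W) := fun i h _ => absurd h (Nat.not_lt_zero i)
  have hlv0 : σ [] ∈ legalMoves G' ∅ (([] : List W).toFinset) :=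
    hσ1 [] hnilLeg hnilCons Even.zero hne0
  have hsingleLegal : LegalSeq G' ∅ [σ []] := legalSeq_append hnilLeg hlv0
  have hsingleCons : StallerConsistent σ [σ []] :=
    stallerConsistent_append hnilCons (fun _ => rfl)
  by_cases hx1 : σ [] ∈ nbhd G' {x'}
  · -- immediate contradiction with x's neighbor a
    obtain ⟨a, haH, haadj⟩ := hxadj
    have ha1 : (⟨a, hmemW haH⟩ : W) ∈ nbhd G' {x'} :=
      (mem_nbhd G').2 (Or.inr ⟨x', Finset.mem_singleton_self _, show G.Adj a x from haadj.symm⟩)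
    have ha2 : (⟨a, hmemW haH⟩ : W) ∈ nbhd G' (nbhd G' {x'}) := subset_nbhd G' _ ha1
    have hane : (⟨a, hmemW haH⟩ : W) ≠ x' := by
      intro hEq
      have hax : a = x := congrArg Subtype.val hEq
      exact hH.1 (hax ▸ haH)
    have hres := hσ2 [σ []] hsingleLegal hsingleCons 0 Nat.one_pos hx1 _ ha2 hane
    have h0 : (([σ []].take 0).toFinset : Finset W) = ∅ := rfl
    rw [h0, nbhd_empty] at hres
    exact absurd hres (Finset.notMem_empty _)
  · -- main case
    have hv0H : (σ [] : W).val ∈ HN := by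
      rcases (σ [] : W).2 with h | h
      · refine Finset.mem_filter.2 ⟨Finset.mem_coe.1 h, fun hadj => hx1 ?_⟩
        exact (mem_nbhd G').2
          (Or.inr ⟨x', Finset.mem_singleton_self _, show G.Adj (σ [] : W).val x from hadj.symm⟩)
      · exact absurd ((mem_nbhd G').2 (Or.inl (Finset.mem_singleton.2
          (Subtype.ext (show (σ [] : W).val = x from h))))) hx1
    set inC : W → Prop :=
      fun w => w.val ∈ HN ∧ Relation.ReflTransGen r (σ [] : W).val w.val with hinCdef
    -- a vertex of HN outside the component of the first move
    have hu0 : ∃ u0 ∈ HN, ¬ Relation.ReflTransGen r (σ [] : W).val u0 := by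
      by_contra hco
      push_neg at hco
      apply hdisc
      haveI : Nonempty (HN : Set V) := ⟨⟨(σ [] : W).val, Finset.mem_coe.2 hv0H⟩⟩
      refine ⟨fun a b => ?_⟩
      have ha := hco a.val (Finset.mem_coe.1 a.2)
      have hb := hco b.val (Finset.mem_coe.1 b.2)
      have hab : Relation.ReflTransGen r a.val b.val :=
        (by haveI : Std.Symm r := ⟨hrsymm⟩; exact Std.Symm.symm _ _ ha : Relation.ReflTransGen r _ _).trans hb
      exact induce_reachable_of_rtg G (HN : Set V) hab a.2 b.2
    obtain ⟨u0, hu0HN, hu0nC⟩ := hu0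
    -- refined witness: u outside component, adjacent to a neighbor w of x
    have hwit : ∃ u w, u ∈ HN ∧ ¬ Relation.ReflTransGen r (σ [] : W).val u ∧
        G.Adj u w ∧ w ∈ H ∧ G.Adj x w := by
      have hRT : Relation.ReflTransGen rH u0 (σ [] : W).val :=
        hHreach u0 (σ [] : W).val (hHNH hu0HN) (hHNH hv0H)
      revert hu0HN hu0nC
      induction hRT using Relation.ReflTransGen.head_induction_on with
      | refl => intro _ h; exact absurd Relation.ReflTransGen.refl h
      | @head a c hstep htail ih =>
        intro hpHN hpnC
        obtain ⟨hadjac, haH', hcH'⟩ := hstep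
        by_cases hcHN : c ∈ HN
        · by_cases hcC : Relation.ReflTransGen r (σ [] : W).val c
          · exact absurd
              (hcC.tail ⟨hadjac.symm, Finset.mem_coe.2 hcHN, Finset.mem_coe.2 hpHN⟩) hpnC
          · exact ih hcHN hcC
        · have hcadjx : G.Adj x c := by
            by_contra hno
            exact hcHN (Finset.mem_filter.2 ⟨Finset.mem_coe.1 hcH', hno⟩)
          exact ⟨a, c, hpHN, hpnC, hadjac, Finset.mem_coe.1 hcH', hcadjx⟩
    obtain ⟨u, w, huHN, hunC, huw, hwH, hxw⟩ := hwit
    have huH : u ∈ H := hHNH huHN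
    have hu_n2 : (⟨u, hmemW huH⟩ : W) ∈ nbhd G' (nbhd G' {x'}) := by
      refine (mem_nbhd G').2 (Or.inr ⟨⟨w, hmemW hwH⟩, ?_, show G.Adj u w from huw⟩)
      exact (mem_nbhd G').2
        (Or.inr ⟨x', Finset.mem_singleton_self _, show G.Adj w x from hxw.symm⟩)
    have hu_ne : (⟨u, hmemW huH⟩ : W) ≠ x' := by
      intro hEq
      have hux : u = x := congrArg Subtype.val hEq
      exact hH.1 (hux ▸ huH)
    have hu_undom : ∀ D : Finset W, (∀ d ∈ D, inC d) →
        (⟨u, hmemW huH⟩ : W) ∉ nbhd G' D := by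
      intro D hD hmem
      rcases (mem_nbhd G').1 hmem with h | ⟨d, hd, hadj⟩
      · exact hunC (hD _ h).2
      · exact hunC ((hD d hd).2.tail
          ⟨(show G.Adj u d.val from hadj).symm, Finset.mem_coe.2 (hD d hd).1,
            Finset.mem_coe.2 huHN⟩)
    -- a legal move always exists while the played set is inside the component
    have hlegal_ex : ∀ D : Finset W, D.Nonempty → (∀ d ∈ D, inC d) →
        (legalMoves G' ∅ D).Nonempty := by
      intro D hDne hD
      obtain ⟨d, hd⟩ := hDne
      have hdH : d.val ∈ H := hHNH (hD d hd).1
      have claim : ∀ p, Relation.ReflTransGen rH p u → ∀ (hp : p ∈ W),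
          (⟨p, hp⟩ : W) ∈ nbhd G' D → (legalMoves G' ∅ D).Nonempty := by
        intro p hRT
        induction hRT using Relation.ReflTransGen.head_induction_on with
        | refl => intro hp hdom; exact absurd hdom (hu_undom D hD)
        | @head a c hstep htail ih =>
          intro hp hdom
          obtain ⟨hadjac, haH', hcH'⟩ := hstep
          have hcW : c ∈ W := Set.mem_union_left _ hcH'
          by_cases hcdom : (⟨c, hcW⟩ : W) ∈ nbhd G' D
          · exact ih hcW hcdom
          · rcases (mem_nbhd G').1 hdom with hmem | ⟨e, he, hadj⟩
            · refine ⟨⟨c, hcW⟩, (mem_legalMoves G').2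
                ⟨?_, Or.inr ⟨⟨a, hp⟩, hmem, show G.Adj c a from hadjac.symm⟩⟩⟩
              intro hsub
              have hmm := hsub (subset_nbhd G' _ (Finset.mem_singleton_self _))
              rw [Finset.empty_union] at hmm
              exact hcdom hmm
            · refine ⟨⟨a, hp⟩, (mem_legalMoves G').2 ⟨?_, Or.inr ⟨e, he, hadj⟩⟩⟩
              intro hsub
              have h2 : (⟨c, hcW⟩ : W) ∈ nbhd G' {(⟨a, hp⟩ : W)} :=
                (mem_nbhd G').2
                  (Or.inr ⟨_, Finset.mem_singleton_self _, show G.Adj c a from hadjac.symm⟩)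
              have hmm := hsub h2
              rw [Finset.empty_union] at hmm
              exact hcdom hmm
      exact claim d.val (hHreach d.val u hdH huH) d.2 (subset_nbhd G' D hd)
    -- legal moves outside N[x'] stay in the component
    have hinv : ∀ D : Finset W, D.Nonempty → (∀ d ∈ D, inC d) →
        ∀ v ∈ legalMoves G' ∅ D, v ∉ nbhd G' {x'} → inC v := by
      intro D hDne hD v hv hvx
      obtain ⟨-, hcond⟩ := (mem_legalMoves G').1 hv
      rcases hcond with hD0 | ⟨d, hd, hadj⟩
      · exact absurd hD0 hDne.ne_empty
      · have hvH : v.val ∈ HN := by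
          rcases v.2 with h | h
          · refine Finset.mem_filter.2 ⟨Finset.mem_coe.1 h, fun ha => hvx ?_⟩
            exact (mem_nbhd G').2
              (Or.inr ⟨x', Finset.mem_singleton_self _, show G.Adj v.val x from ha.symm⟩)
          · exact absurd ((mem_nbhd G').2 (Or.inl (Finset.mem_singleton.2
              (Subtype.ext (show v.val = x from h))))) hvx
        exact ⟨hvH, (hD d hd).2.tail
          ⟨(show G.Adj v.val d.val from hadj).symm, Finset.mem_coe.2 (hD d hd).1,
            Finset.mem_coe.2 hvH⟩⟩
    -- main recursion
    have main : ∀ n (l : List W), LegalSeq G' ∅ l → StallerConsistent σ l → l ≠ [] →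
        (∀ w ∈ l, inC w) → Fintype.card W - l.toFinset.card ≤ n →
        ∃ l', LegalSeq G' ∅ l' ∧ StallerConsistent σ l' ∧
          ∃ i, ∃ hi : i < l'.length, l'.get ⟨i, hi⟩ ∈ nbhd G' {x'} ∧
            ∀ w ∈ l'.take i, inC w := by
      intro n
      induction n with
      | zero =>
        intro l hleg hcons hlne hC hcard
        exfalso
        have hle : Fintype.card W ≤ l.toFinset.card := by omega
        have huniv : l.toFinset = Finset.univ :=
          Finset.eq_univ_of_card _ (le_antisymm (Finset.card_le_univ _) hle)
        have hxl : x' ∈ l := by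
          rw [← List.mem_toFinset, huniv]; exact Finset.mem_univ _
        exact hH.1 (hHNH (hC x' hxl).1)
      | succ n ih =>
        intro l hleg hcons hlne hC hcard
        have hCfin : ∀ d ∈ l.toFinset, inC d := fun d hd => hC d (List.mem_toFinset.1 hd)
        have hlfne : l.toFinset.Nonempty := by
          obtain ⟨a, ha⟩ := List.exists_mem_of_ne_nil l hlne
          exact ⟨a, List.mem_toFinset.2 ha⟩
        have hne' := hlegal_ex l.toFinset hlfne hCfin
        obtain ⟨v, hv, hvσ⟩ : ∃ v, v ∈ legalMoves G' ∅ l.toFinset ∧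
            (Even l.length → v = σ l) := by
          by_cases he : Even l.length
          · exact ⟨σ l, hσ1 l hleg hcons he hne', fun _ => rfl⟩
          · obtain ⟨v, hv⟩ := hne'
            exact ⟨v, hv, fun h => absurd h he⟩
        have hleg' := legalSeq_append hleg hv
        have hcons' := stallerConsistent_append hcons hvσ
        by_cases hvx : v ∈ nbhd G' {x'}
        · refine ⟨l ++ [v], hleg', hcons', l.length, by simp, ?_, ?_⟩
          · simpa using hvx
          · rw [List.take_left (l₁ := l) (l₂ := [v])]
            exact hC
        · have hvC : inC v := hinv l.toFinset hlfne hCfin v hv hvx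
          have hC' : ∀ z ∈ l ++ [v], inC z := by
            intro z hz
            rcases List.mem_append.1 hz with h | h
            · exact hC z h
            · rw [List.mem_singleton.1 h]; exact hvC
          have hvnm : v ∉ l.toFinset := not_mem_of_legal hv
          have hcard' : Fintype.card W - (l ++ [v]).toFinset.card ≤ n := by
            have h1 : (l ++ [v]).toFinset = insert v l.toFinset := by
              rw [List.toFinset_append]
              simp
            have h2 : (insert v l.toFinset).card = l.toFinset.card + 1 :=
              Finset.card_insert_of_notMem hvnm
            rw [h1, h2]
            omega
          exact ih (l ++ [v]) hleg' hcons' (by simp) hC' hcard'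
    have hv0C : inC (σ [] : W) := ⟨hv0H, Relation.ReflTransGen.refl⟩
    obtain ⟨l', hleg', hcons', i, hi, hins, htake⟩ :=
      main (Fintype.card W) [σ []] hsingleLegal hsingleCons (by simp)
        (by intro z hz; rw [List.mem_singleton.1 hz]; exact hv0C) (Nat.sub_le _ _)
    have hfinal := hσ2 l' hleg' hcons' i hi hins _ hu_n2 hu_ne
    exact hu_undom (l'.take i).toFinset
      (fun d hd => htake d (List.mem_toFinset.1 hd)) hfinal
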